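/- arXiv:2008.09479 — 6 statements merged into one kernel-verified Lean document; each statement's English description precedes it below -/
import Mathlib

section
/- The energy-conserving scheme for the damped harmonic oscillator, defined by (y^{n+1} - y^n)/Δt = (p^{n+1} + p^n)/(2m) and (p^{n+1} - p^n)/Δt = -k(y^{n+1} + y^n)/2 - γ(p^{n+1} + p^n)/2, exactly satisfies the discrete energy balance H^{n+1} = H^n - (γ/m)((p^{n+1}+p^n)/2)² Δt, where H^n = (p^n)²/(2m) + k(y^n)²/2. -/
theorem stmt7 (m k γ Δt : ℝ) (hm : 0 < m) (hΔt : 0 < Δt)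
    (y0 y1 p0 p1 : ℝ)
    (h1 : (y1 - y0) / Δt = (p1 + p0) / (2 * m))
    (h2 : (p1 - p0) / Δt = -k * (y1 + y0) / 2 - γ * (p1 + p0) / 2)
    (H0 H1 : ℝ)
    (hH0 : H0 = p0 ^ 2 / (2 * m) + k * y0 ^ 2 / 2)
    (hH1 : H1 = p1 ^ 2 / (2 * m) + k * y1 ^ 2 / 2) :
    H1 = H0 - (γ / m) * ((p1 + p0) / 2) ^ 2 * Δt := by
  have hm' : m ≠ 0 := hm.ne'
  have ht : Δt ≠ 0 := hΔt.ne'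
  have e1 : (y1 - y0) * (2 * m) = (p1 + p0) * Δt := by
    field_simp at h1; linarith
  have e2 : (p1 - p0) * 2 = (-k * (y1 + y0) - γ * (p1 + p0)) * Δt := by
    field_simp at h2; linarith
  have key : (p1 + p0) * ((p1 - p0) * 2) + k * ((y1 + y0) * ((y1 - y0) * (2 * m)))
      = (p1 + p0) * ((-k * (y1 + y0) - γ * (p1 + p0)) * Δt)
        + k * ((y1 + y0) * ((p1 + p0) * Δt)) := by
    rw [e1, e2]
  subst hH0 hH1
  field_simp
  ring_nf at key ⊢
  nlinarith [key]
end

section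
/- For the energy-conserving scheme with general potential V, defined by (y^{n+1} - y^n)/Δt = (T(p^{n+1}) - T(p^n))/(p^{n+1} - p^n) and (p^{n+1} - p^n)/Δt = -(V(y^{n+1}) - V(y^n))/(y^{n+1} - y^n) - γ(p^{n+1} + p^n)/2, with T(p) = p²/(2m), one has T(p^{n+1}) + V(y^{n+1}) = T(p^n) + V(y^n) - (γ/m)((p^{n+1}+p^n)/2)² Δt, provided y^{n+1} ≠ y^n and p^{n+1} ≠ p^n. -/
/-! The scheme is a discrete-gradient method: the quotients in the two update equations are the
slopes of `T` and `V` across the step, so the increments `T p¹ - T p⁰` and `V y¹ - V y⁰` factor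
through the same two slopes that drive the scheme. The conservative terms then cancel exactly as
for the continuous flow, leaving the friction term `-γ · p̄ · slope T p⁰ p¹ · Δt` with
`p̄ = (p¹ + p⁰)/2`; for `T p = p²/(2m)` that slope is `p̄ / m`. -/

section DiscreteGradient

variable {k : Type*} [Field k]

theorem sub_eq_sub_mul_slope (f : k → k) (a b : k) : f b - f a = (b - a) * slope f a b :=
  (sub_smul_slope f a b).symm

theorem energy_eq_of_discreteGradient_step (T V : k → k) {γ Δt y0 y1 p0 p1 : k} (hΔt : Δt ≠ 0)
    (h1 : (y1 - y0) / Δt = slope T p0 p1)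
    (h2 : (p1 - p0) / Δt = -slope V y0 y1 - γ * (p1 + p0) / 2) :
    T p1 + V y1 = T p0 + V y0 - γ * ((p1 + p0) / 2) * slope T p0 p1 * Δt := by
  rw [div_eq_iff hΔt] at h1 h2
  linear_combination sub_eq_sub_mul_slope T p0 p1 + sub_eq_sub_mul_slope V y0 y1
    + slope T p0 p1 * h2 + slope V y0 y1 * h1

theorem slope_sq_div (c : k) {a b : k} (hab : b ≠ a) :
    slope (fun x ↦ x ^ 2 / c) a b = (b + a) / c := by
  rw [slope_def_field, div_sub_div_same, sq_sub_sq, div_right_comm, mul_div_assoc,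
    div_self (sub_ne_zero.mpr hab), mul_one]

end DiscreteGradient

theorem stmt8_general (m γ Δt : ℝ) (hΔt : 0 < Δt)
    (V : ℝ → ℝ) (T : ℝ → ℝ) (hT : ∀ p, T p = p ^ 2 / (2 * m))
    (y0 y1 p0 p1 : ℝ) (hp : p1 ≠ p0)
    (h1 : (y1 - y0) / Δt = (T p1 - T p0) / (p1 - p0))
    (h2 : (p1 - p0) / Δt = -(V y1 - V y0) / (y1 - y0) - γ * (p1 + p0) / 2) :
    T p1 + V y1 = T p0 + V y0 - (γ / m) * ((p1 + p0) / 2) ^ 2 * Δt := by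
  have hslope : slope T p0 p1 = (p1 + p0) / (2 * m) := by
    rw [funext hT]
    exact slope_sq_div _ hp
  rw [← slope_def_field] at h1
  rw [neg_div, ← slope_def_field] at h2
  rw [energy_eq_of_discreteGradient_step T V hΔt.ne' h1 h2, hslope]
  ring

theorem stmt8 (m γ Δt : ℝ) (hm : 0 < m) (hΔt : 0 < Δt)
    (V : ℝ → ℝ) (T : ℝ → ℝ) (hT : ∀ p, T p = p ^ 2 / (2 * m))
    (y0 y1 p0 p1 : ℝ) (hy : y1 ≠ y0) (hp : p1 ≠ p0)
    (h1 : (y1 - y0) / Δt = (T p1 - T p0) / (p1 - p0))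
    (h2 : (p1 - p0) / Δt = -(V y1 - V y0) / (y1 - y0) - γ * (p1 + p0) / 2) :
    T p1 + V y1 = T p0 + V y0 - (γ / m) * ((p1 + p0) / 2) ^ 2 * Δt :=
  stmt8_general m γ Δt hΔt V T hT y0 y1 p0 p1 hp h1 h2
end

section
/- For the velocity Verlet scheme applied to the damped harmonic oscillator, p^{n+1/2} = (p^n + (Δt/2)f(y^n))/(1 + γΔt/2), y^{n+1} = y^n + (Δt/m)p^{n+1/2}, p^{n+1} = (1 - γΔt/2)p^{n+1/2} + (Δt/2)f(y^{n+1}) with f(y) = -ky, the determinant of the Jacobian of the map (y^n,p^n) ↦ (y^{n+1},p^{n+1}) equals (2 - γΔt)/(2 + γΔt). -/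
/-- The linear map (x,y) ↦ (a x + b y, c x + d y) as a continuous linear map. -/
noncomputable def matCLM (a b c d : ℝ) : ℝ × ℝ →L[ℝ] ℝ × ℝ :=
  LinearMap.toContinuousLinearMap
    { toFun := fun v => (a * v.1 + b * v.2, c * v.1 + d * v.2)
      map_add' := by
        intro x y
        simp only [Prod.fst_add, Prod.snd_add, Prod.mk_add_mk, Prod.mk.injEq]
        constructor <;> ring
      map_smul' := by
        intro r x
        simp only [Prod.smul_fst, Prod.smul_snd, smul_eq_mul, Prod.smul_mk,
          RingHom.id_apply, Prod.mk.injEq]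
        constructor <;> ring }

lemma matCLM_det (a b c d : ℝ) : (matCLM a b c d).det = a * d - b * c := by
  have : (matCLM a b c d : ℝ × ℝ →ₗ[ℝ] ℝ × ℝ).det = a * d - b * c := by
    rw [← LinearMap.det_toMatrix (Module.Basis.finTwoProd ℝ)]
    rw [Matrix.det_fin_two]
    simp [LinearMap.toMatrix_apply, matCLM, Module.Basis.finTwoProd]
  exact this

theorem stmt10 (m k γ Δt : ℝ) (hm : 0 < m) (hΔt : 0 < Δt)
    (hden : 1 + γ * Δt / 2 ≠ 0)
    (f : ℝ → ℝ) (hf : ∀ y, f y = -k * y)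
    (Φ : ℝ × ℝ → ℝ × ℝ)
    (hΦ : ∀ v : ℝ × ℝ,
      Φ v =
        (v.1 + (Δt / m) * ((v.2 + (Δt / 2) * f v.1) / (1 + γ * Δt / 2)),
          (1 - γ * Δt / 2) * ((v.2 + (Δt / 2) * f v.1) / (1 + γ * Δt / 2)) +
            (Δt / 2) * f (v.1 + (Δt / m) * ((v.2 + (Δt / 2) * f v.1) / (1 + γ * Δt / 2))))) :
    ∀ v : ℝ × ℝ, (fderiv ℝ Φ v).det = (2 - γ * Δt) / (2 + γ * Δt) := by
  intro v
  set D : ℝ := 1 + γ * Δt / 2 with hD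
  set a : ℝ := 1 - (Δt / m) * (Δt / 2) * k / D with ha
  set b : ℝ := (Δt / m) / D with hb
  set c : ℝ := (1 - γ * Δt / 2) * (-(Δt / 2) * k) / D + (-(Δt / 2) * k) * a with hc
  set d : ℝ := (1 - γ * Δt / 2) / D + (-(Δt / 2) * k) * b with hd
  have hΦeq : Φ = matCLM a b c d := by
    funext w
    rw [hΦ]
    simp only [matCLM, LinearMap.coe_toContinuousLinearMap', LinearMap.coe_mk, AddHom.coe_mk,
      hf]
    have hD0 : D ≠ 0 := hden
    rw [Prod.mk.injEq]
    constructor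
    · rw [ha, hb]; field_simp; ring
    · rw [hc, hd, ha, hb]; field_simp; ring
  rw [hΦeq, (matCLM a b c d).fderiv, matCLM_det]
  rw [hD] at hden
  have h2 : (2 : ℝ) + γ * Δt ≠ 0 := by
    intro h; apply hden; linarith
  have key : a * d - b * c = (1 - γ * Δt / 2) / D := by
    rw [ha, hb, hc, hd]; ring
  rw [key, hD, div_eq_div_iff hden h2]
  ring
end

section
/- The discrete Caldirola-Kanai scheme (y^{n+1}-y^n)/Δt = e^{-γ(n+1/2)Δt}(ϖ^{n+1}+ϖ^n)/(2m), (ϖ^{n+1}-ϖ^n)/Δt = -e^{γ(n+1/2)Δt}(k/2)(y^{n+1}+y^n), expressed in variables (y, q) with qⁿ = ϖⁿ e^{-γnΔt}Δt/(2m), defines a linear map (yⁿ,qⁿ) ↦ (y^{n+1},q^{n+1}) whose Jacobian determinant equals e^{-γΔt}. -/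
/-!
Writing `E = exp (-γΔt/2)` (so `exp (-γΔt) = E²`) and `s = Δt²k/(4m)`, the step map is linear with
matrix `[[1 - 2s/(1+s), 2E/(1+s)], [-2sE/(1+s), 2E²/(1+s) - E²]]`. Its determinant is
`E² ((2 + 2s)/(1+s) - 1) = E²`.
-/

open Module

theorem det_fderiv_eq_of_apply_eq {𝕜 : Type*} [NontriviallyNormedField 𝕜] [CompleteSpace 𝕜]
    {Φ : 𝕜 × 𝕜 → 𝕜 × 𝕜} {a b c d : 𝕜}
    (hΦ : ∀ v, Φ v = (a * v.1 + b * v.2, c * v.1 + d * v.2)) (v : 𝕜 × 𝕜) :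
    (fderiv 𝕜 Φ v).det = a * d - b * c := by
  set L := (Matrix.toLin (Basis.finTwoProd 𝕜) (Basis.finTwoProd 𝕜)
    !![a, b; c, d]).toContinuousLinearMap
  have hΦL : Φ = L := funext fun w => by simp [L, hΦ]
  rw [hΦL, L.fderiv]
  simp only [L, LinearMap.det_toContinuousLinearMap, LinearMap.det_toLin, Matrix.det_fin_two_of]

theorem det_fderiv_dampedMidpointStep {𝕜 : Type*} [NontriviallyNormedField 𝕜] [CompleteSpace 𝕜]
    (E s : 𝕜) (hs : 1 + s ≠ 0) {Φ : 𝕜 × 𝕜 → 𝕜 × 𝕜}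
    (hΦ : ∀ v : 𝕜 × 𝕜, Φ v =
      (v.1 + (2 * v.2 * E - 2 * s * v.1) / (1 + s),
        (2 * v.2 * E - 2 * s * v.1) / (1 + s) * E - v.2 * E ^ 2))
    (v : 𝕜 × 𝕜) :
    (fderiv 𝕜 Φ v).det = E ^ 2 := by
  have hΦ' : ∀ w : 𝕜 × 𝕜, Φ w =
      ((1 - 2 * s / (1 + s)) * w.1 + 2 * E / (1 + s) * w.2,
        -(2 * s * E) / (1 + s) * w.1 + (2 * E ^ 2 / (1 + s) - E ^ 2) * w.2) := by
    intro w
    rw [hΦ w, Prod.mk.injEq]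
    constructor <;> field_simp <;> ring
  rw [det_fderiv_eq_of_apply_eq hΦ']
  field_simp
  ring

theorem stmt14_general (m k γ Δt : ℝ)
    (hden : 1 + Δt ^ 2 * k / (4 * m) ≠ 0)
    (Φ : ℝ × ℝ → ℝ × ℝ)
    (hΦ : ∀ v : ℝ × ℝ,
      Φ v =
        (v.1 + (2 * v.2 * Real.exp (-γ * Δt / 2) - Δt ^ 2 * k * v.1 / (2 * m)) /
            (1 + Δt ^ 2 * k / (4 * m)),
          ((2 * v.2 * Real.exp (-γ * Δt / 2) - Δt ^ 2 * k * v.1 / (2 * m)) /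
              (1 + Δt ^ 2 * k / (4 * m))) * Real.exp (-γ * Δt / 2) -
            v.2 * Real.exp (-γ * Δt))) :
    ∀ v : ℝ × ℝ, (fderiv ℝ Φ v).det = Real.exp (-γ * Δt) := by
  have hsq : Real.exp (-γ * Δt) = Real.exp (-γ * Δt / 2) ^ 2 := by
    rw [← Real.exp_nat_mul]
    ring_nf
  rw [hsq]
  refine det_fderiv_dampedMidpointStep _ _ hden fun w => ?_
  rw [hΦ w, hsq]
  ring_nf

theorem stmt14 (m k γ Δt : ℝ) (hm : 0 < m) (hk : 0 ≤ k) (hΔt : 0 < Δt)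
    (hden : 1 + Δt ^ 2 * k / (4 * m) ≠ 0)
    (Φ : ℝ × ℝ → ℝ × ℝ)
    (hΦ : ∀ v : ℝ × ℝ,
      Φ v =
        (v.1 + (2 * v.2 * Real.exp (-γ * Δt / 2) - Δt ^ 2 * k * v.1 / (2 * m)) /
            (1 + Δt ^ 2 * k / (4 * m)),
          ((2 * v.2 * Real.exp (-γ * Δt / 2) - Δt ^ 2 * k * v.1 / (2 * m)) /
              (1 + Δt ^ 2 * k / (4 * m))) * Real.exp (-γ * Δt / 2) -
            v.2 * Real.exp (-γ * Δt))) :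
    ∀ v : ℝ × ℝ, (fderiv ℝ Φ v).det = Real.exp (-γ * Δt) :=
  stmt14_general m k γ Δt hden Φ hΦ
end

section
/- The impulse invariance recursion y^{n+1} = 2 e^{-γΔt/2} cos(ω_γ Δt) y^n - e^{-γΔt} y^{n-1}, rewritten as the linear map (ŷⁿ, p̂ⁿ) ↦ (ŷ^{n+1}, p̂^{n+1}) with ŷⁿ = (yⁿ + y^{n-1})/2 and p̂ⁿ = m(yⁿ - y^{n-1})/Δt, has Jacobian determinant equal to e^{-γΔt} (i.e. the map is conformal symplectic with contraction factor e^{-γΔt}). -/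
/-!
In the variables `(y^{n-1}, yⁿ)` the recursion is the companion map
`(u, w) ↦ (w, -a₁ w - a₂ u)`, whose determinant is `a₂`. The averaged variables `(ŷ, p̂)` are an
invertible linear change of these coordinates, applied at step `n` and at step `n + 1` alike, so
the map on `(ŷ, p̂)` is conjugate to the companion map and has the same determinant.
-/

section Recurrence

variable {R : Type*} [CommRing R]

/-- The step `(y^{n-1}, yⁿ) ↦ (yⁿ, y^{n+1})` of `y^{n+1} + a₁ yⁿ + a₂ y^{n-1} = 0`. -/
def recurrenceStep (a₁ a₂ : R) : R × R →ₗ[R] R × R :=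
  (LinearMap.snd R R R).prod (-a₁ • LinearMap.snd R R R - a₂ • LinearMap.fst R R R)

@[simp]
theorem recurrenceStep_apply (a₁ a₂ : R) (y : R × R) :
    recurrenceStep a₁ a₂ y = (y.2, -a₁ * y.2 - a₂ * y.1) := rfl

theorem det_recurrenceStep (a₁ a₂ : R) : LinearMap.det (recurrenceStep a₁ a₂) = a₂ := by
  rw [← LinearMap.det_toMatrix (Module.Basis.finTwoProd R), Matrix.det_fin_two]
  simp [LinearMap.toMatrix_apply]

end Recurrence

section AveragedCoords

variable {K : Type*} [Field K] [NeZero (2 : K)]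

/-- `(y^{n-1}, yⁿ) ↦ (ŷⁿ, p̂ⁿ)`. -/
def averagedCoords (m Δt : K) (hm : m ≠ 0) (hΔt : Δt ≠ 0) : (K × K) ≃ₗ[K] K × K where
  toFun y := ((y.1 + y.2) / 2, m * (y.2 - y.1) / Δt)
  invFun v := (v.1 - Δt * v.2 / (2 * m), v.1 + Δt * v.2 / (2 * m))
  map_add' y z := by ext <;> simp only [Prod.fst_add, Prod.snd_add] <;> ring
  map_smul' c y := by
    ext <;> simp only [Prod.smul_fst, Prod.smul_snd, smul_eq_mul, RingHom.id_apply] <;> ring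
  left_inv y := by ext <;> field_simp <;> ring
  right_inv v := by ext <;> field_simp <;> ring

@[simp]
theorem averagedCoords_apply (m Δt : K) (hm : m ≠ 0) (hΔt : Δt ≠ 0) (y : K × K) :
    averagedCoords m Δt hm hΔt y = ((y.1 + y.2) / 2, m * (y.2 - y.1) / Δt) := rfl

@[simp]
theorem averagedCoords_symm_apply (m Δt : K) (hm : m ≠ 0) (hΔt : Δt ≠ 0) (v : K × K) :
    (averagedCoords m Δt hm hΔt).symm v =
      (v.1 - Δt * v.2 / (2 * m), v.1 + Δt * v.2 / (2 * m)) := rfl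

end AveragedCoords

theorem LinearMap.det_fderiv {𝕜 E : Type*} [NontriviallyNormedField 𝕜] [CompleteSpace 𝕜]
    [NormedAddCommGroup E] [NormedSpace 𝕜 E] [FiniteDimensional 𝕜 E] (f : E →ₗ[𝕜] E) (v : E) :
    (fderiv 𝕜 f v).det = LinearMap.det f := by
  rw [← LinearMap.coe_toContinuousLinearMap' f, ContinuousLinearMap.fderiv]
  rfl

theorem stmt15_general (m γ Δt : ℝ) (hm : 0 < m) (hΔt : 0 < Δt)
    (a₁ a₂ : ℝ)
    (ha₂ : a₂ = Real.exp (-γ * Δt))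
    (Φ : ℝ × ℝ → ℝ × ℝ)
    -- Φ maps (ŷⁿ, p̂ⁿ) to (ŷ^{n+1}, p̂^{n+1}): recover y^{n-1}, yⁿ from
    -- ŷⁿ = (yⁿ + y^{n-1})/2, p̂ⁿ = m (yⁿ - y^{n-1})/Δt, apply the recursion
    -- y^{n+1} = -a₁ yⁿ - a₂ y^{n-1}, and form the new averaged variables.
    (hΦ : ∀ v : ℝ × ℝ,
      Φ v =
        (((v.1 + Δt * v.2 / (2 * m)) +
            (-a₁ * (v.1 + Δt * v.2 / (2 * m)) - a₂ * (v.1 - Δt * v.2 / (2 * m)))) / 2,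
          m * ((-a₁ * (v.1 + Δt * v.2 / (2 * m)) - a₂ * (v.1 - Δt * v.2 / (2 * m))) -
              (v.1 + Δt * v.2 / (2 * m))) / Δt)) :
    ∀ v : ℝ × ℝ, (fderiv ℝ Φ v).det = Real.exp (-γ * Δt) := by
  let e := averagedCoords m Δt hm.ne' hΔt.ne'
  have hΦ_conj : Φ = ⇑(e.toLinearMap ∘ₗ recurrenceStep a₁ a₂ ∘ₗ e.symm.toLinearMap) := by
    funext v
    simp only [e, hΦ, LinearMap.comp_apply, LinearEquiv.coe_coe, averagedCoords_symm_apply,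
      recurrenceStep_apply, averagedCoords_apply]
  intro v
  rw [hΦ_conj, LinearMap.det_fderiv, LinearMap.det_conj, det_recurrenceStep, ha₂]

theorem stmt15 (m γ Δt ωγ : ℝ) (hm : 0 < m) (hγ : 0 ≤ γ) (hΔt : 0 < Δt)
    (a₁ a₂ : ℝ)
    (ha₁ : a₁ = -2 * Real.exp (-γ * Δt / 2) * Real.cos (ωγ * Δt))
    (ha₂ : a₂ = Real.exp (-γ * Δt))
    (Φ : ℝ × ℝ → ℝ × ℝ)
    -- Φ maps (ŷⁿ, p̂ⁿ) to (ŷ^{n+1}, p̂^{n+1}): recover y^{n-1}, yⁿ from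
    -- ŷⁿ = (yⁿ + y^{n-1})/2, p̂ⁿ = m (yⁿ - y^{n-1})/Δt, apply the recursion
    -- y^{n+1} = -a₁ yⁿ - a₂ y^{n-1}, and form the new averaged variables.
    (hΦ : ∀ v : ℝ × ℝ,
      Φ v =
        (((v.1 + Δt * v.2 / (2 * m)) +
            (-a₁ * (v.1 + Δt * v.2 / (2 * m)) - a₂ * (v.1 - Δt * v.2 / (2 * m)))) / 2,
          m * ((-a₁ * (v.1 + Δt * v.2 / (2 * m)) - a₂ * (v.1 - Δt * v.2 / (2 * m))) -
              (v.1 + Δt * v.2 / (2 * m))) / Δt)) :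
    ∀ v : ℝ × ℝ, (fderiv ℝ Φ v).det = Real.exp (-γ * Δt) :=
  stmt15_general m γ Δt hm hΔt a₁ a₂ ha₂ Φ hΦ
end

section
/- The conformal-symplectic split energy-conserving scheme (EC^[cs]): p^{n+1} = ((1 - Δt²k/(4m))/(1 + Δt²k/(4m))) e^{-γΔt} p^n - (Δt k/(1 + Δt²k/(4m))) y^n, y^{n+1} = y^n + (Δt/(2m))(p^{n+1} + e^{-γΔt} p^n), defines a linear map whose Jacobian determinant equals e^{-γΔt}. -/
theorem stmt17 (m k γ Δt : ℝ) (hm : 0 < m) (hk : 0 ≤ k) (hΔt : 0 < Δt)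
    (hden : 1 + Δt ^ 2 * k / (4 * m) ≠ 0)
    (Φ : ℝ × ℝ → ℝ × ℝ)
    (hΦ : ∀ v : ℝ × ℝ,
      Φ v =
        (v.1 + (Δt / (2 * m)) *
            ((((1 - Δt ^ 2 * k / (4 * m)) / (1 + Δt ^ 2 * k / (4 * m))) *
                Real.exp (-γ * Δt) * v.2 -
              (Δt * k / (1 + Δt ^ 2 * k / (4 * m))) * v.1) +
              Real.exp (-γ * Δt) * v.2),
          ((1 - Δt ^ 2 * k / (4 * m)) / (1 + Δt ^ 2 * k / (4 * m))) *
              Real.exp (-γ * Δt) * v.2 -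
            (Δt * k / (1 + Δt ^ 2 * k / (4 * m))) * v.1)) :
    ∀ v : ℝ × ℝ, (fderiv ℝ Φ v).det = Real.exp (-γ * Δt) := by
  intro v
  set E := Real.exp (-γ * Δt) with hE
  set D := 1 + Δt ^ 2 * k / (4 * m) with hD
  set a : ℝ := 1 - (Δt / (2 * m)) * (Δt * k / D) with ha
  set b : ℝ := (Δt / (2 * m)) * (((1 - Δt ^ 2 * k / (4 * m)) / D) * E + E) with hb
  set c : ℝ := -(Δt * k / D) with hc
  set d : ℝ := ((1 - Δt ^ 2 * k / (4 * m)) / D) * E with hd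
  have key : ∀ w : ℝ × ℝ, Φ w = (a * w.1 + b * w.2, c * w.1 + d * w.2) := by
    intro w
    rw [hΦ]
    simp only [ha, hb, hc, hd, Prod.mk.injEq]
    constructor <;> ring
  let L : ℝ × ℝ →ₗ[ℝ] ℝ × ℝ :=
    { toFun := fun w => (a * w.1 + b * w.2, c * w.1 + d * w.2)
      map_add' := by intro x y; simp [Prod.ext_iff]; constructor <;> ring
      map_smul' := by intro r x; simp [Prod.ext_iff, Prod.smul_def]; constructor <;> ring }
  have hΦL : Φ = L.toContinuousLinearMap := by
    funext w; rw [key w]; rfl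
  rw [hΦL, ContinuousLinearMap.fderiv]
  have hdet : (L.toContinuousLinearMap : (ℝ × ℝ) →L[ℝ] ℝ × ℝ).det = LinearMap.det L := rfl
  rw [hdet, ← LinearMap.det_toMatrix (Module.Basis.finTwoProd ℝ), Matrix.det_fin_two]
  have h00 : LinearMap.toMatrix (Module.Basis.finTwoProd ℝ) (Module.Basis.finTwoProd ℝ) L 0 0 = a := by
    simp [LinearMap.toMatrix_apply, Module.Basis.finTwoProd, L]
  have h01 : LinearMap.toMatrix (Module.Basis.finTwoProd ℝ) (Module.Basis.finTwoProd ℝ) L 0 1 = b := by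
    simp [LinearMap.toMatrix_apply, Module.Basis.finTwoProd, L]
  have h10 : LinearMap.toMatrix (Module.Basis.finTwoProd ℝ) (Module.Basis.finTwoProd ℝ) L 1 0 = c := by
    simp [LinearMap.toMatrix_apply, Module.Basis.finTwoProd, L]
  have h11 : LinearMap.toMatrix (Module.Basis.finTwoProd ℝ) (Module.Basis.finTwoProd ℝ) L 1 1 = d := by
    simp [LinearMap.toMatrix_apply, Module.Basis.finTwoProd, L]
  rw [h00, h01, h10, h11]
  have hm' : (m : ℝ) ≠ 0 := ne_of_gt hm
  rw [ha, hb, hc, hd, hD]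
  field_simp
  ring
end
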